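/- Let n ≥ r+1 and r ≥ g·d+2, and let the data x_1,…,x_n ∈ ℝ^d be in general position. Then there exists a constant c > 0 depending only on the data x_1,…,x_n (and on d, g, r) with the following property: for every family y_1,…,y_n ∈ ℝ^d in general position that differs from x_1,…,x_n in at most one index, there exists a configuration R* over an r-element subset of {1,…,n} (for the data y_1,…,y_n) which minimizes det W_R over all such configurations and whose cluster means satisfy ||m_{R*}(j)|| ≤ c for every nonempty cluster R*_j. -/

import Mathlib

open Matrix Finset Real

/-- The sample mean of the points `x i`, `i ∈ S`; a fixed a-priori vector `dflt` if `S = ∅`. -/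
noncomputable def clusterMean {n d : ℕ} (x : Fin n → Fin d → ℝ) (dflt : Fin d → ℝ)
    (S : Finset (Fin n)) : Fin d → ℝ :=
  if S.Nonempty then (S.card : ℝ)⁻¹ • ∑ i ∈ S, x i else dflt

/-- The pooled (within-groups) SSP matrix of the configuration `C` for the data `x`:
`W = Σ_j Σ_{i ∈ C j} (x i − m_j)(x i − m_j)ᵀ`, where `m_j` is the sample mean of cluster `j`. -/
noncomputable def pooledSSP {n d g : ℕ} (x : Fin n → Fin d → ℝ) (dflt : Fin g → Fin d → ℝ)
    (C : Fin g → Finset (Fin n)) : Matrix (Fin d) (Fin d) ℝ :=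
  ∑ j, ∑ i ∈ C j, Matrix.vecMulVec (x i - clusterMean x (dflt j) (C j))
    (x i - clusterMean x (dflt j) (C j))

/-- A configuration over an `r`-element subset of `{1,…,n}`: a family of `g` pairwise
disjoint (possibly empty) clusters whose union has exactly `r` elements. -/
def IsConfig {n g : ℕ} (r : ℕ) (C : Fin g → Finset (Fin n)) : Prop :=
  (∀ j k : Fin g, j ≠ k → Disjoint (C j) (C k)) ∧ (Finset.univ.biUnion C).card = r

/-- A family of points of `ℝ^d` is in general position if any `d+1` of them are affinely
independent. -/
def InGeneralPosition {n d : ℕ} (x : Fin n → Fin d → ℝ) : Prop :=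
  ∀ s : Finset (Fin n), s.card = d + 1 → AffineIndependent ℝ (fun i : s => x (i : Fin n))

/-!
Let `C` be an optimal configuration for data `y` that agree with `x` off one index `a`.
Clusters avoiding `a` consist of points of `x`, so their means are bounded by `∑ i, ‖x i‖`.
A singleton cluster `{a}` contributes nothing to `W`, so it can be traded for an unused point.
Otherwise let `v` be the deviation of `y a` from the mean of its cluster. Removing `a` gives
`W_x(C') + v vᵀ ≤ W_y(C)` for a configuration `C'` of `r - 1 > g d` points of `x`; by
pigeonhole and general position one cluster of `C'` has `d + 1` affinely independent points,
so `W_x(C')` is positive definite and `ε • 1 ≤ W_x(C')` for an `ε > 0` uniform over the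
finitely many such `C'`. Comparing `C` with a configuration avoiding `a` gives
`det W_y(C) ≤ D := max_P det W_x(P)`, so `ε ^ d * (1 + |v|² / ε) ≤ D`, which bounds `|v|`.
Finally the mean of the cluster of `a` is the mean of its clean points plus `v / (|C_j| - 1)`.
-/

open scoped MatrixOrder Topology

namespace Matrix

variable {m : Type*} [Fintype m] [DecidableEq m]

lemma one_le_det_of_one_le {M : Matrix m m ℝ} (h : 1 ≤ M) : 1 ≤ M.det := by
  have hM : M.PosSemidef := nonneg_iff_posSemidef.1 (zero_le_one.trans h)
  have hspec := (algebraMap_le_iff_le_spectrum (r := (1 : ℝ)) hM.isHermitian).1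
    (by simpa using h)
  rw [hM.isHermitian.det_eq_prod_eigenvalues]
  calc (1 : ℝ) = ∏ _i : m, 1 := by simp
    _ ≤ _ := prod_le_prod (by simp) fun i _ => by
        simpa using hspec _ (hM.isHermitian.eigenvalues_mem_spectrum_real i)

lemma PosDef.det_le_det {A B : Matrix m m ℝ} (hA : A.PosDef) (h : A ≤ B) : A.det ≤ B.det := by
  set S := CFC.sqrt A
  have hSS : S * S = A := CFC.sqrt_mul_sqrt_self A hA.posSemidef.nonneg
  have hSu : IsUnit S.det := by
    refine isUnit_iff_ne_zero.2 fun h0 => hA.det_pos.ne' ?_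
    rw [← hSS, det_mul, h0, zero_mul]
  have hS : S⁻¹ * A * S⁻¹ = 1 := by
    rw [← hSS, ← mul_assoc, nonsing_inv_mul _ hSu, one_mul, mul_nonsing_inv _ hSu]
  have hstar : star S⁻¹ = S⁻¹ := by
    rw [star_eq_conjTranspose, conjTranspose_nonsing_inv,
      (nonneg_iff_posSemidef.1 (CFC.sqrt_nonneg A)).isHermitian]
  have hB : 1 ≤ S⁻¹ * B * S⁻¹ := by
    simpa [← hS, hstar] using star_left_conjugate_le_conjugate h S⁻¹
  have hdet : S⁻¹.det * A.det * S⁻¹.det = 1 := by rw [← det_mul, ← det_mul, hS, det_one]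
  calc A.det ≤ A.det * (S⁻¹ * B * S⁻¹).det := le_mul_of_one_le_right hA.det_pos.le
        (one_le_det_of_one_le hB)
    _ = B.det * (S⁻¹.det * A.det * S⁻¹.det) := by rw [det_mul, det_mul]; ring
    _ = B.det := by rw [hdet, mul_one]

lemma PosDef.eventually_smul_one_le {A : Matrix m m ℝ} (hA : A.PosDef) :
    ∀ᶠ ε in 𝓝[>] (0 : ℝ), ε • (1 : Matrix m m ℝ) ≤ A := by
  cases subsingleton_or_nontrivial (Matrix m m ℝ)
  · exact Filter.Eventually.of_forall fun ε => (Subsingleton.elim _ _).le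
  obtain ⟨r, hr, hrA⟩ := (CFC.exists_pos_algebraMap_le_iff hA.isHermitian).2
    fun x hx => hA.isStrictlyPositive.spectrum_pos hx
  filter_upwards [Ioc_mem_nhdsGT hr] with ε hε
  rw [Algebra.algebraMap_eq_smul_one] at hrA
  refine le_trans ?_ hrA
  rw [le_iff, ← sub_smul]
  exact PosSemidef.one.smul (sub_nonneg.2 hε.2)

lemma det_smul_one_add_vecMulVec {ε : ℝ} (hε : ε ≠ 0) (v : m → ℝ) :
    (ε • 1 + vecMulVec v v).det = ε ^ Fintype.card m * (1 + ε⁻¹ * (v ⬝ᵥ v)) := by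
  have h : ε • 1 + vecMulVec v v =
      ε • (1 + replicateCol Unit (ε⁻¹ • v) * replicateRow Unit v) := by
    rw [← vecMulVec_eq, smul_add, smul_vecMulVec, smul_smul, mul_inv_cancel₀ hε, one_smul]
  rw [h, det_smul, det_one_add_replicateCol_mul_replicateRow, dotProduct_smul, smul_eq_mul,
    dotProduct_comm]

lemma dotProduct_self_le_of_smul_one_add_vecMulVec_le {ε : ℝ} (hε : 0 < ε) {v : m → ℝ}
    {W : Matrix m m ℝ} (h : ε • 1 + vecMulVec v v ≤ W) :
    v ⬝ᵥ v ≤ ε * W.det / ε ^ Fintype.card m := by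
  have hpd : (ε • 1 + vecMulVec v v).PosDef :=
    (PosDef.one.smul hε).add_posSemidef (posSemidef_vecMulVec_self_star v)
  have hdet := hpd.det_le_det h
  rw [det_smul_one_add_vecMulVec hε.ne'] at hdet
  have hεd : 0 < ε ^ Fintype.card m := pow_pos hε _
  rw [le_div_iff₀ hεd]
  have : ε⁻¹ * (v ⬝ᵥ v) * ε = v ⬝ᵥ v := by field_simp
  nlinarith [dotProduct_self_star_nonneg v]

end Matrix

lemma sqrt_dotProduct_self_eq_norm {ι : Type*} [Fintype ι] (v : ι → ℝ) :
    √(v ⬝ᵥ v) = ‖WithLp.toLp 2 v‖ := by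
  simp [EuclideanSpace.norm_eq, dotProduct, sq]

lemma eq_zero_of_dotProduct_eq_of_affineIndependent {ι m : Type*} [Fintype ι] [Fintype m]
    {p : ι → m → ℝ} (hp : AffineIndependent ℝ p) (hcard : Fintype.card ι = Fintype.card m + 1)
    {u : m → ℝ} {t : ℝ} (h : ∀ i, u ⬝ᵥ p i = t) : u = 0 := by
  have hspan : affineSpan ℝ (Set.range p) = ⊤ := by
    rw [hp.affineSpan_eq_top_iff_card_eq_finrank_add_one, Module.finrank_fintype_fun_eq_card,
      hcard]
  have hconst : (dotProductBilin ℝ ℝ u).toAffineMap = AffineMap.const ℝ (m → ℝ) t :=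
    AffineMap.ext_on hspan (by rintro - ⟨i, rfl⟩; simpa using h i)
  have h0 := congrArg (· 0) hconst
  have hu := congrArg (· u) hconst
  simp only [LinearMap.coe_toAffineMap, dotProductBilin_apply_apply, dotProduct_zero,
    AffineMap.const_apply] at h0 hu
  exact dotProduct_self_eq_zero.1 (hu.trans h0.symm)

lemma exists_forall_ne_eq_of_card_filter_ne_le_one {ι α : Type*} [Fintype ι] [Nonempty ι]
    [DecidableEq α] {x y : ι → α} (h : #(univ.filter fun i => y i ≠ x i) ≤ 1) :
    ∃ a, ∀ i, i ≠ a → y i = x i := by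
  obtain ⟨a, ha⟩ := card_le_one_iff_subset_singleton.1 h
  exact ⟨a, fun i hi => by_contra fun hne => hi (mem_singleton.1 (ha (by simpa using hne)))⟩

section Scatter

variable {n d : ℕ}

noncomputable def scatter (p : Fin n → Fin d → ℝ) (dflt : Fin d → ℝ) (S : Finset (Fin n)) :
    Matrix (Fin d) (Fin d) ℝ :=
  ∑ i ∈ S, vecMulVec (p i - clusterMean p dflt S) (p i - clusterMean p dflt S)

lemma pooledSSP_eq_sum_scatter {g : ℕ} (p : Fin n → Fin d → ℝ) (dflt : Fin g → Fin d → ℝ)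
    (C : Fin g → Finset (Fin n)) : pooledSSP p dflt C = ∑ j, scatter p (dflt j) (C j) := rfl

lemma clusterMean_congr {x y : Fin n → Fin d → ℝ} {dflt : Fin d → ℝ} {S : Finset (Fin n)}
    (h : ∀ i ∈ S, y i = x i) : clusterMean y dflt S = clusterMean x dflt S := by
  rw [clusterMean, clusterMean, sum_congr rfl h]

lemma scatter_congr {x y : Fin n → Fin d → ℝ} {dflt : Fin d → ℝ} {S : Finset (Fin n)}
    (h : ∀ i ∈ S, y i = x i) : scatter y dflt S = scatter x dflt S := by
  refine sum_congr rfl fun i hi => ?_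
  rw [h i hi, clusterMean_congr h]

lemma card_smul_clusterMean {p : Fin n → Fin d → ℝ} {S : Finset (Fin n)} (hS : S.Nonempty)
    (dflt : Fin d → ℝ) : (#S : ℝ) • clusterMean p dflt S = ∑ i ∈ S, p i := by
  rw [clusterMean, if_pos hS, smul_smul, mul_inv_cancel₀ (by simpa using hS.ne_empty), one_smul]

lemma sum_sub_clusterMean (p : Fin n → Fin d → ℝ) (dflt : Fin d → ℝ) (S : Finset (Fin n)) :
    ∑ i ∈ S, (p i - clusterMean p dflt S) = 0 := by
  rcases S.eq_empty_or_nonempty with rfl | hS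
  · simp
  rw [sum_sub_distrib, sum_const, ← Nat.cast_smul_eq_nsmul ℝ,
    card_smul_clusterMean hS, sub_self]

/-- Steiner's formula. -/
lemma sum_vecMulVec_sub_eq_scatter_add (p : Fin n → Fin d → ℝ) (dflt c : Fin d → ℝ)
    (S : Finset (Fin n)) :
    ∑ i ∈ S, vecMulVec (p i - c) (p i - c) = scatter p dflt S +
      (#S : ℝ) • vecMulVec (clusterMean p dflt S - c) (clusterMean p dflt S - c) := by
  set m := clusterMean p dflt S
  have hsplit : ∀ i, vecMulVec (p i - c) (p i - c) = vecMulVec (p i - m) (p i - m) +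
      (vecMulVec (p i - m) (m - c) + vecMulVec (m - c) (p i - m)) + vecMulVec (m - c) (m - c) := by
    intro i
    rw [show p i - c = (p i - m) + (m - c) by abel, add_vecMulVec, vecMulVec_add, vecMulVec_add]
    abel
  have hcross : ∑ i ∈ S, (vecMulVec (p i - m) (m - c) + vecMulVec (m - c) (p i - m)) = 0 := by
    have hL : ∑ i ∈ S, vecMulVec (p i - m) (m - c) = vecMulVec (∑ i ∈ S, (p i - m)) (m - c) :=
      (map_sum ((vecMulVecBilin ℝ ℝ).flip (m - c)) _ _).symm
    have hR : ∑ i ∈ S, vecMulVec (m - c) (p i - m) = vecMulVec (m - c) (∑ i ∈ S, (p i - m)) :=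
      (map_sum (vecMulVecBilin ℝ ℝ (m - c)) _ _).symm
    rw [sum_add_distrib, hL, hR, sum_sub_clusterMean, zero_vecMulVec, vecMulVec_zero,
      add_zero]
  simp only [hsplit, sum_add_distrib, hcross, add_zero, sum_const,
    ← Nat.cast_smul_eq_nsmul ℝ]
  rfl

lemma posSemidef_scatter (p : Fin n → Fin d → ℝ) (dflt : Fin d → ℝ) (S : Finset (Fin n)) :
    (scatter p dflt S).PosSemidef :=
  posSemidef_sum S fun _ _ => posSemidef_vecMulVec_self_star _

lemma scatter_singleton (p : Fin n → Fin d → ℝ) (dflt : Fin d → ℝ) (a : Fin n) :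
    scatter p dflt {a} = 0 := by
  have hm : clusterMean p dflt {a} = p a := by simp [clusterMean]
  simp [scatter, hm]

lemma scatter_erase_add_le (p : Fin n → Fin d → ℝ) (dflt dflt' : Fin d → ℝ)
    {S : Finset (Fin n)} {a : Fin n} (ha : a ∈ S) :
    scatter p dflt' (S.erase a) +
        vecMulVec (p a - clusterMean p dflt S) (p a - clusterMean p dflt S) ≤
      scatter p dflt S := by
  set m := clusterMean p dflt S
  have hS : scatter p dflt S = vecMulVec (p a - m) (p a - m) + scatter p dflt' (S.erase a) +
      (#(S.erase a) : ℝ) • vecMulVec (clusterMean p dflt' (S.erase a) - m)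
        (clusterMean p dflt' (S.erase a) - m) := by
    rw [add_assoc, ← sum_vecMulVec_sub_eq_scatter_add,
      add_sum_erase S (fun i => vecMulVec (p i - m) (p i - m)) ha]
    rfl
  rw [hS, add_comm (vecMulVec _ _)]
  exact le_add_of_nonneg_right ((posSemidef_vecMulVec_self_star _).smul (by positivity)).nonneg

lemma dotProduct_scatter_mulVec (p : Fin n → Fin d → ℝ) (dflt : Fin d → ℝ) (S : Finset (Fin n))
    (u : Fin d → ℝ) :
    u ⬝ᵥ (scatter p dflt S *ᵥ u) = ∑ i ∈ S, (u ⬝ᵥ (p i - clusterMean p dflt S)) ^ 2 := by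
  simp only [scatter, sum_mulVec, dotProduct_sum, dotProduct_mulVec, vecMul_vecMulVec,
    smul_dotProduct, smul_eq_mul, sq]
  exact sum_congr rfl fun _ _ => by rw [dotProduct_comm _ u]

lemma posDef_scatter {p : Fin n → Fin d → ℝ} (hp : InGeneralPosition p) (dflt : Fin d → ℝ)
    {S : Finset (Fin n)} (hS : d + 1 ≤ #S) : (scatter p dflt S).PosDef := by
  obtain ⟨s, hsS, hs⟩ := exists_subset_card_eq hS
  refine posDef_iff_dotProduct_mulVec.2 ⟨(posSemidef_scatter p dflt S).isHermitian, fun u hu => ?_⟩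
  rw [star_trivial, dotProduct_scatter_mulVec]
  by_contra! hle
  have hzero := (sum_eq_zero_iff_of_nonneg fun i _ => sq_nonneg _).1
    (hle.antisymm (sum_nonneg fun _ _ => sq_nonneg _))
  refine hu (eq_zero_of_dotProduct_eq_of_affineIndependent (hp s hs) (by simp [hs])
    (t := u ⬝ᵥ clusterMean p dflt S) fun i => ?_)
  simpa [dotProduct_sub, sub_eq_zero] using hzero i (hsS i.2)

lemma clusterMean_eq_clusterMean_erase_add (p : Fin n → Fin d → ℝ) (dflt dflt' : Fin d → ℝ)
    {S : Finset (Fin n)} {a : Fin n} (ha : a ∈ S) (hT : (S.erase a).Nonempty) :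
    clusterMean p dflt S = clusterMean p dflt' (S.erase a) +
      (#(S.erase a) : ℝ)⁻¹ • (p a - clusterMean p dflt S) := by
  have hT0 : (#(S.erase a) : ℝ) ≠ 0 := by simpa using hT.ne_empty
  have hcard : (#S : ℝ) = #(S.erase a) + 1 := by
    rw [card_erase_of_mem ha, Nat.cast_sub (card_pos.2 ⟨a, ha⟩)]; ring
  have hsum := card_smul_clusterMean ⟨a, ha⟩ dflt (p := p)
  rw [← add_sum_erase _ _ ha, ← card_smul_clusterMean hT dflt', hcard, add_smul,
    one_smul] at hsum
  apply smul_right_injective _ hT0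
  simp only [smul_add, smul_smul, mul_inv_cancel₀ hT0, one_smul, smul_sub]
  linear_combination (norm := module) hsum

lemma norm_clusterMean_le {p : Fin n → Fin d → ℝ} {S : Finset (Fin n)}
    (hS : S.Nonempty) (dflt : Fin d → ℝ) {B : ℝ} (hB : ∀ i ∈ S, ‖WithLp.toLp 2 (p i)‖ ≤ B) :
    ‖WithLp.toLp 2 (clusterMean p dflt S)‖ ≤ B := by
  have hS0 : (0 : ℝ) < #S := by exact_mod_cast hS.card_pos
  rw [clusterMean, if_pos hS, WithLp.toLp_smul, norm_smul, WithLp.toLp_sum,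
    Real.norm_of_nonneg (by positivity), inv_mul_le_iff₀ hS0]
  calc ‖∑ i ∈ S, WithLp.toLp 2 (p i)‖ ≤ ∑ i ∈ S, ‖WithLp.toLp 2 (p i)‖ := norm_sum_le _ _
    _ ≤ #S * B := by simpa using sum_le_card_nsmul S _ B hB

end Scatter

section Configurations

variable {n d g : ℕ}

lemma pooledSSP_congr {x y : Fin n → Fin d → ℝ} {dflt : Fin g → Fin d → ℝ}
    {C : Fin g → Finset (Fin n)} (h : ∀ i ∈ univ.biUnion C, y i = x i) :
    pooledSSP y dflt C = pooledSSP x dflt C :=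
  sum_congr rfl fun j _ => scatter_congr fun i hi => h i (mem_biUnion.2 ⟨j, mem_univ j, hi⟩)

lemma exists_lt_card_of_mul_lt_card_biUnion (C : Fin g → Finset (Fin n))
    (h : g * d < #(univ.biUnion C)) : ∃ j, d < #(C j) := by
  by_contra! hC
  have := (card_biUnion_le).trans (sum_le_sum fun j (_ : j ∈ univ) => hC j)
  simp only [sum_const, card_univ, Fintype.card_fin, smul_eq_mul] at this
  omega

lemma posDef_pooledSSP {x : Fin n → Fin d → ℝ} (hx : InGeneralPosition x)
    (dflt : Fin g → Fin d → ℝ) {C : Fin g → Finset (Fin n)} (hC : g * d < #(univ.biUnion C)) :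
    (pooledSSP x dflt C).PosDef := by
  obtain ⟨j, hj⟩ := exists_lt_card_of_mul_lt_card_biUnion C hC
  rw [pooledSSP_eq_sum_scatter, ← add_sum_erase _ _ (mem_univ j)]
  exact (posDef_scatter hx (dflt j) hj).add_posSemidef
    (posSemidef_sum _ fun k _ => posSemidef_scatter x (dflt k) (C k))

lemma exists_pos_smul_one_le_pooledSSP {x : Fin n → Fin d → ℝ} (hx : InGeneralPosition x)
    (dflt : Fin g → Fin d → ℝ) :
    ∃ ε : ℝ, 0 < ε ∧ ∀ C : Fin g → Finset (Fin n), g * d < #(univ.biUnion C) →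
      ε • 1 ≤ pooledSSP x dflt C := by
  have hev : ∀ᶠ ε in 𝓝[>] (0 : ℝ),
      ∀ C : {C : Fin g → Finset (Fin n) // g * d < #(univ.biUnion C)},
        ε • 1 ≤ pooledSSP x dflt C.1 :=
    Filter.eventually_all.2 fun C => (posDef_pooledSSP hx dflt C.2).eventually_smul_one_le
  obtain ⟨ε, hεC, hε⟩ := (hev.and self_mem_nhdsWithin).exists
  exact ⟨ε, hε, fun C hC => hεC ⟨C, hC⟩⟩

lemma pooledSSP_erase_add_le (p : Fin n → Fin d → ℝ) (dflt : Fin g → Fin d → ℝ)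
    {C : Fin g → Finset (Fin n)} (hC : ∀ j k, j ≠ k → Disjoint (C j) (C k)) {a : Fin n}
    {j : Fin g} (ha : a ∈ C j) :
    pooledSSP p dflt (fun k => (C k).erase a) +
        vecMulVec (p a - clusterMean p (dflt j) (C j)) (p a - clusterMean p (dflt j) (C j)) ≤
      pooledSSP p dflt C := by
  have hrest : ∀ k ∈ univ.erase j, (C k).erase a = C k := fun k hk =>
    erase_eq_of_notMem fun hak => disjoint_left.1 (hC k j (ne_of_mem_erase hk)) hak ha
  simp only [pooledSSP_eq_sum_scatter, ← add_sum_erase _ _ (mem_univ j)]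
  rw [sum_congr rfl fun k hk => by rw [hrest k hk], add_right_comm]
  exact add_le_add (scatter_erase_add_le p (dflt j) (dflt j) ha) le_rfl

lemma card_biUnion_erase (C : Fin g → Finset (Fin n)) {a : Fin n} (ha : a ∈ univ.biUnion C) :
    #(univ.biUnion fun k => (C k).erase a) = #(univ.biUnion C) - 1 := by
  rw [← card_erase_of_mem ha]
  congr 1
  ext i
  simp only [mem_biUnion, mem_univ, true_and, mem_erase]
  tauto

lemma exists_isConfig_subset (hg : 0 < g) {r : ℕ} {s : Finset (Fin n)} (hr : r ≤ #s) :
    ∃ C : Fin g → Finset (Fin n), IsConfig r C ∧ univ.biUnion C ⊆ s := by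
  obtain ⟨S, hSs, hS⟩ := exists_subset_card_eq hr
  set j₀ : Fin g := ⟨0, hg⟩
  have hU : univ.biUnion (fun j => if j = j₀ then S else ∅) = S := by
    ext i
    simp only [mem_biUnion, mem_univ, true_and]
    refine ⟨fun ⟨j, hj⟩ => ?_, fun hi => ⟨j₀, by simpa using hi⟩⟩
    split_ifs at hj
    exacts [hj, absurd hj (notMem_empty i)]
  refine ⟨fun j => if j = j₀ then S else ∅, ⟨fun j k hjk => ?_, by rw [hU, hS]⟩, hU.le.trans hSs⟩
  by_cases hj : j = j₀
  · simp [hj, Ne.symm (hj ▸ hjk)]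
  · simp [hj]

lemma IsConfig.update_singleton {r : ℕ} {C : Fin g → Finset (Fin n)} (hC : IsConfig r C)
    {j : Fin g} {a b : Fin n} (hj : C j = {a}) (hb : b ∉ univ.biUnion C) :
    IsConfig r (Function.update C j {b}) := by
  set C' := Function.update C j {b}
  have hbC : ∀ l, Disjoint {b} (C l) := fun l =>
    disjoint_singleton_left.2 fun hbl => hb (mem_biUnion.2 ⟨l, mem_univ l, hbl⟩)
  have hdisj : ∀ k l, k ≠ l → Disjoint (C' k) (C' l) := by
    intro k l hkl
    rcases eq_or_ne k j with rfl | hk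
    · simpa [C', Function.update_of_ne hkl.symm] using hbC l
    rcases eq_or_ne l j with rfl | hl
    · simpa [C', Function.update_of_ne hk] using (hbC k).symm
    · simpa [C', Function.update_of_ne hk, Function.update_of_ne hl] using hC.1 k l hkl
  have hcard : ∀ k, #(C' k) = #(C k) := fun k => by
    rcases eq_or_ne k j with rfl | hk
    · simp [C', hj]
    · simp [C', hk]
  refine ⟨hdisj, ?_⟩
  rw [card_biUnion fun k _ l _ => hdisj k l, ← hC.2, card_biUnion fun k _ l _ => hC.1 k l]
  exact sum_congr rfl fun k _ => hcard k

lemma pooledSSP_update_singleton (p : Fin n → Fin d → ℝ) (dflt : Fin g → Fin d → ℝ)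
    {C : Fin g → Finset (Fin n)} {j : Fin g} {a : Fin n} (hj : C j = {a}) (b : Fin n) :
    pooledSSP p dflt (Function.update C j {b}) = pooledSSP p dflt C := by
  simp only [pooledSSP_eq_sum_scatter]
  refine sum_congr rfl fun k _ => ?_
  by_cases hk : k = j
  · subst hk; simp [hj, scatter_singleton]
  · simp [hk]

end Configurations

section Optimal

variable {n d g r : ℕ}

/-- Optimality for the trimmed determinant criterion (TDC). -/
def IsTDCOptimal (r : ℕ) (p : Fin n → Fin d → ℝ) (dflt : Fin g → Fin d → ℝ)
    (C : Fin g → Finset (Fin n)) : Prop :=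
  IsConfig r C ∧ ∀ P : Fin g → Finset (Fin n), IsConfig r P →
    (pooledSSP p dflt C).det ≤ (pooledSSP p dflt P).det

lemma exists_isTDCOptimal (hg : 0 < g) (hr : r ≤ n) (p : Fin n → Fin d → ℝ)
    (dflt : Fin g → Fin d → ℝ) : ∃ C, IsTDCOptimal r p dflt C := by
  classical
  obtain ⟨C₀, hC₀, -⟩ := exists_isConfig_subset hg (s := univ) (by simpa using hr)
  obtain ⟨C, hC, hmin⟩ := exists_min_image (univ.filter (IsConfig r))
    (fun C => (pooledSSP p dflt C).det) ⟨C₀, by simpa using hC₀⟩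
  exact ⟨C, (mem_filter.1 hC).2, fun P hP => hmin P (by simpa using hP)⟩

/-- A singleton cluster `{a}` contributes nothing to the SSP matrix, so it can be traded for
an unused point. -/
lemma IsTDCOptimal.exists_erase_nonempty {p : Fin n → Fin d → ℝ} {dflt : Fin g → Fin d → ℝ}
    {C : Fin g → Finset (Fin n)} (hC : IsTDCOptimal r p dflt C) (hrn : r < n) (a : Fin n) :
    ∃ C', IsTDCOptimal r p dflt C' ∧ ∀ j, a ∈ C' j → ((C' j).erase a).Nonempty := by
  by_cases hsing : ∃ j, C j = {a}
  · obtain ⟨j, hj⟩ := hsing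
    obtain ⟨b, hb⟩ : ∃ b, b ∉ univ.biUnion C := by
      by_contra! h
      have := card_le_card fun i (_ : i ∈ univ) => h i
      rw [hC.1.2, card_univ, Fintype.card_fin] at this
      omega
    have haj : a ∈ C j := hj ▸ mem_singleton_self a
    refine ⟨Function.update C j {b}, ⟨hC.1.update_singleton hj hb, fun P hP => ?_⟩,
      fun k hk => absurd hk ?_⟩
    · rw [pooledSSP_update_singleton p dflt hj]
      exact hC.2 P hP
    rcases eq_or_ne k j with rfl | hkj
    · rw [Function.update_self, mem_singleton]
      rintro rfl
      exact hb (mem_biUnion.2 ⟨k, mem_univ k, haj⟩)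
    · rw [Function.update_of_ne hkj]
      exact fun hak => disjoint_left.1 (hC.1.1 k j hkj) hak haj
  · push Not at hsing
    refine ⟨C, hC, fun j ha => nonempty_iff_ne_empty.2 fun h => ?_⟩
    rcases (erase_eq_empty_iff _ _).1 h with h0 | h1
    · simp [h0] at ha
    · exact hsing j h1

lemma IsTDCOptimal.norm_sub_clusterMean_le {x y : Fin n → Fin d → ℝ}
    {dflt : Fin g → Fin d → ℝ} {D ε : ℝ}
    (hD : ∀ P : Fin g → Finset (Fin n), (pooledSSP x dflt P).det ≤ D) (hε : 0 < ε)
    (hεx : ∀ P : Fin g → Finset (Fin n), g * d < #(univ.biUnion P) → ε • 1 ≤ pooledSSP x dflt P)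
    (hg : 0 < g) (hrn : r < n) (hgr : g * d + 1 < r) {a : Fin n} (hya : ∀ i, i ≠ a → y i = x i)
    {C : Fin g → Finset (Fin n)} (hC : IsTDCOptimal r y dflt C) {j : Fin g} (haj : a ∈ C j) :
    ‖WithLp.toLp 2 (y a - clusterMean y (dflt j) (C j))‖ ≤ √(ε * D / ε ^ d) := by
  set v := y a - clusterMean y (dflt j) (C j)
  have haC : a ∈ univ.biUnion C := mem_biUnion.2 ⟨j, mem_univ j, haj⟩
  have hdet : (pooledSSP y dflt C).det ≤ D := by
    obtain ⟨P, hP, hPa⟩ := exists_isConfig_subset hg (r := r) (s := univ.erase a)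
      (by rw [card_erase_of_mem (mem_univ a), card_univ, Fintype.card_fin]; omega)
    calc _ ≤ (pooledSSP y dflt P).det := hC.2 P hP
      _ = (pooledSSP x dflt P).det := by
        rw [pooledSSP_congr fun i hi => hya i (ne_of_mem_erase (hPa hi))]
      _ ≤ D := hD P
  have hle : ε • 1 + vecMulVec v v ≤ pooledSSP y dflt C :=
    calc ε • 1 + vecMulVec v v ≤ pooledSSP x dflt (fun k => (C k).erase a) + vecMulVec v v :=
          add_le_add (hεx _ (by rw [card_biUnion_erase C haC, hC.1.2]; omega)) le_rfl
      _ = pooledSSP y dflt (fun k => (C k).erase a) + vecMulVec v v := by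
          rw [pooledSSP_congr fun i hi => hya i ?_]
          obtain ⟨k, -, hik⟩ := mem_biUnion.1 hi
          exact ne_of_mem_erase hik
      _ ≤ pooledSSP y dflt C := pooledSSP_erase_add_le y dflt hC.1.1 haj
  rw [← sqrt_dotProduct_self_eq_norm]
  refine Real.sqrt_le_sqrt ((dotProduct_self_le_of_smul_one_add_vecMulVec_le hε hle).trans ?_)
  rw [Fintype.card_fin]
  gcongr

lemma norm_clusterMean_le_add {x y : Fin n → Fin d → ℝ}
    {dflt : Fin g → Fin d → ℝ} {B K : ℝ} (hB : ∀ i, ‖WithLp.toLp 2 (x i)‖ ≤ B) (hK : 0 ≤ K)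
    {a : Fin n} (hya : ∀ i, i ≠ a → y i = x i) {C : Fin g → Finset (Fin n)}
    (hsing : ∀ j, a ∈ C j → ((C j).erase a).Nonempty)
    (hv : ∀ j, a ∈ C j → ‖WithLp.toLp 2 (y a - clusterMean y (dflt j) (C j))‖ ≤ K)
    {j : Fin g} (hj : (C j).Nonempty) :
    ‖WithLp.toLp 2 (clusterMean y (dflt j) (C j))‖ ≤ B + K := by
  by_cases haj : a ∈ C j
  · have hT := hsing j haj
    have hT1 : (1 : ℝ) ≤ #((C j).erase a) := by exact_mod_cast hT.card_pos
    rw [clusterMean_eq_clusterMean_erase_add y (dflt j) (dflt j) haj hT,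
      clusterMean_congr fun i hi => hya i (ne_of_mem_erase hi), WithLp.toLp_add, WithLp.toLp_smul]
    refine (norm_add_le _ _).trans (add_le_add (norm_clusterMean_le hT _ fun i _ => hB i) ?_)
    rw [norm_smul, norm_inv, Real.norm_natCast]
    exact (mul_le_of_le_one_left (norm_nonneg _) (inv_le_one_of_one_le₀ hT1)).trans (hv j haj)
  · rw [clusterMean_congr fun i hi => hya i (ne_of_mem_of_not_mem hi haj)]
    exact (norm_clusterMean_le hj _ fun i _ => hB i).trans (le_add_of_nonneg_right hK)

end Optimal

/-- Theorem 4.1(a) of the paper.  If `n ≥ r + 1` and `r ≥ g·d + 2` and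
the data are in general position, then there is a constant `c > 0`, depending only on the
data, bounding (in Euclidean norm) the cluster means of some TDC-optimal configuration of
any admissible modification of the data in at most one index. -/
theorem tdc_means_withstand_one_replacement {n d g r : ℕ} (hg : 0 < g)
    (hn : r + 1 ≤ n) (hr : g * d + 2 ≤ r)
    (x : Fin n → Fin d → ℝ) (hx : InGeneralPosition x) (dflt : Fin g → Fin d → ℝ) :
    ∃ c : ℝ, 0 < c ∧
      ∀ y : Fin n → Fin d → ℝ, InGeneralPosition y →
        (Finset.univ.filter (fun i => y i ≠ x i)).card ≤ 1 →
        ∃ C : Fin g → Finset (Fin n), IsConfig r C ∧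
          (∀ P : Fin g → Finset (Fin n), IsConfig r P →
            (pooledSSP y dflt C).det ≤ (pooledSSP y dflt P).det) ∧
          ∀ j : Fin g, (C j).Nonempty →
            Real.sqrt (clusterMean y (dflt j) (C j) ⬝ᵥ clusterMean y (dflt j) (C j)) ≤ c := by
  have : Nonempty (Fin n) := ⟨⟨0, by omega⟩⟩
  obtain ⟨D, hD⟩ := (Set.finite_range fun P : Fin g → Finset (Fin n) =>
    (pooledSSP x dflt P).det).bddAbove
  obtain ⟨ε, hε, hεx⟩ := exists_pos_smul_one_le_pooledSSP hx dflt
  set B := ∑ i, ‖WithLp.toLp 2 (x i)‖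
  have hB : ∀ i, ‖WithLp.toLp 2 (x i)‖ ≤ B := fun i =>
    single_le_sum (f := fun i => ‖WithLp.toLp 2 (x i)‖) (fun i _ => norm_nonneg _) (mem_univ i)
  refine ⟨B + √(ε * D / ε ^ d) + 1, by positivity, fun y _ hxy => ?_⟩
  obtain ⟨a, hya⟩ := exists_forall_ne_eq_of_card_filter_ne_le_one hxy
  obtain ⟨C₀, hC₀⟩ : ∃ C, IsTDCOptimal r y dflt C := exists_isTDCOptimal hg (by omega) y dflt
  obtain ⟨C, hC, hsing⟩ := hC₀.exists_erase_nonempty (by omega) a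
  refine ⟨C, hC.1, hC.2, fun j hj => ?_⟩
  have hv := fun k (hak : a ∈ C k) => hC.norm_sub_clusterMean_le (fun P => hD ⟨P, rfl⟩) hε hεx
    hg (by omega) (by omega) hya hak
  rw [sqrt_dotProduct_self_eq_norm]
  linarith [norm_clusterMean_le_add hB (Real.sqrt_nonneg _) hya hsing hv hj]
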